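/- arXiv:1805.11776 — 4 statements merged into one kernel-verified Lean document; each statement's English description precedes it below -/
import Mathlib

section
/- Let f be a smooth symmetric function on the positive cone Γ₊ = {κ ∈ ℝⁿ : κᵢ > 0 ∀i} that is strictly increasing in each variable. If for all i ≠ j one has (∂f/∂κᵢ · κᵢ - ∂f/∂κⱼ · κⱼ)(κᵢ - κⱼ) ≥ 0, then for any point κ ∈ Γ₊ with κ₁κ₂ > 1 and κᵢ ≥ 1 for i ≥ 2, the quantity Σᵢ (∂f/∂κᵢ)(κᵢ² - 1) is nonnegative. -/
/-- Let `f` be a C¹ symmetric function on the positive cone `Γ₊`, strictly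
increasing in each variable (positive partial derivatives), satisfying
`(∂f/∂κᵢ κᵢ - ∂f/∂κⱼ κⱼ)(κᵢ - κⱼ) ≥ 0` for `i ≠ j`.  If `κ ∈ Γ₊` is ordered
`κ₀ ≤ κ₁ ≤ ⋯`, with `κᵢ ≥ 1` for `i ≥ 1` and `κ₀ κ₁ > 1`, then
`∑ᵢ (∂f/∂κᵢ)(κᵢ² - 1) ≥ 0`. -/
theorem stmt2 (n : ℕ) (f : (Fin (n + 2) → ℝ) → ℝ)
    (hf : ContDiffOn ℝ (⊤ : ℕ∞) f {κ : Fin (n + 2) → ℝ | ∀ i, 0 < κ i})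
    (hsymm : ∀ (κ : Fin (n + 2) → ℝ) (σ : Equiv.Perm (Fin (n + 2))), f (κ ∘ σ) = f κ)
    (hmono : ∀ κ ∈ {κ : Fin (n + 2) → ℝ | ∀ i, 0 < κ i}, ∀ i,
      0 < fderiv ℝ f κ (Pi.single i 1))
    (hcond : ∀ κ ∈ {κ : Fin (n + 2) → ℝ | ∀ i, 0 < κ i}, ∀ i j, i ≠ j →
      0 ≤ (fderiv ℝ f κ (Pi.single i 1) * κ i - fderiv ℝ f κ (Pi.single j 1) * κ j) *
          (κ i - κ j))
    (κ : Fin (n + 2) → ℝ) (hκ : ∀ i, 0 < κ i)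
    (hord : ∀ i j : Fin (n + 2), i ≤ j → κ i ≤ κ j)
    (h1 : ∀ i : Fin (n + 2), i ≠ 0 → 1 ≤ κ i)
    (h12 : 1 < κ 0 * κ 1) :
    0 ≤ ∑ i, fderiv ℝ f κ (Pi.single i 1) * ((κ i) ^ 2 - 1) := by
  set T : Fin (n + 2) → ℝ := fun i => fderiv ℝ f κ (Pi.single i 1) * ((κ i) ^ 2 - 1)
    with hT
  have hrest : ∀ i : Fin (n + 2), i ≠ 0 → 0 ≤ T i := by
    intro i hi
    have h1i := h1 i hi
    have := hmono κ hκ i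
    have : (0:ℝ) ≤ (κ i) ^ 2 - 1 := by nlinarith
    exact mul_nonneg (le_of_lt (hmono κ hκ i)) this
  by_cases h0 : 1 ≤ κ 0
  · apply Finset.sum_nonneg
    intro i _
    rcases eq_or_ne i 0 with rfl | hi
    · have : (0:ℝ) ≤ (κ 0) ^ 2 - 1 := by nlinarith
      exact mul_nonneg (le_of_lt (hmono κ hκ 0)) this
    · exact hrest i hi
  · push_neg at h0
    have hκ0 := hκ 0
    have hκ1 : 1 < κ 1 := by
      nlinarith
    have hne : (0 : Fin (n+2)) ≠ 1 := by simp
    have hle : fderiv ℝ f κ (Pi.single (0 : Fin (n+2)) 1) * κ 0 ≤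
        fderiv ℝ f κ (Pi.single (1 : Fin (n+2)) 1) * κ 1 := by
      have hc := hcond κ hκ 0 1 hne
      have hlt : κ 0 - κ 1 < 0 := by linarith
      nlinarith
    have key : 0 ≤ T 0 + T 1 := by
      have hm0 := hmono κ hκ 0
      have hm1 := hmono κ hκ 1
      simp only [hT]
      nlinarith [mul_nonneg (sub_nonneg.2 hle) (le_of_lt (by nlinarith : (0:ℝ) < 1 - (κ 0)^2)),
        mul_nonneg (mul_nonneg (le_of_lt hm1) (by positivity : (0:ℝ) ≤ κ 0 + κ 1)) (by nlinarith : (0:ℝ) ≤ κ 0 * κ 1 - 1)]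
    have hsplit : ∑ i, T i = T 0 + T 1 + ∑ i ∈ Finset.univ \ {0, 1}, T i := by
      rw [add_comm (T 0 + T 1)]
      rw [Finset.sum_sdiff_eq_sub (Finset.subset_univ _), Finset.sum_pair hne]
      ring
    show 0 ≤ ∑ i, T i
    rw [hsplit]
    have : 0 ≤ ∑ i ∈ Finset.univ \ {0, 1}, T i := by
      apply Finset.sum_nonneg
      intro i hi
      simp only [Finset.mem_sdiff, Finset.mem_insert, Finset.mem_singleton] at hi
      exact hrest i (fun h => hi.2 (Or.inl h))
    linarith
end

section
/- For any k > 0, the power-sum function f(κ) = n^{-1/k} (Σᵢ κᵢ^k)^{1/k} on Γ₊ satisfies: (i) f is positive, symmetric, homogeneous of degree 1, strictly increasing, with f(1,...,1)=1; (ii) (∂f/∂κᵢ·κᵢ - ∂f/∂κⱼ·κⱼ)(κᵢ-κⱼ) ≥ 0 for all i≠j; (iii) Σ_{i,j}(∂²log f/∂κᵢ∂κⱼ)yᵢyⱼ + Σᵢ κᵢ⁻¹(∂log f/∂κᵢ)yᵢ² ≥ 0 for all y ∈ ℝⁿ. -/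
/-!
Write `S = ∑ κᵢ^k`. The chain rule gives `∂ᵢ f = (f / S) κᵢ^(k-1)`, so `κᵢ ∂ᵢ f = (f / S) κᵢ^k`
is increasing in `κᵢ`, which is (ii). For (iii), `∂ᵢ log f = κᵢ^(k-1) / S`, and the quadratic form
collapses to `k / S² · (S ∑ κᵢ^(k-2) yᵢ² - (∑ κᵢ^(k-1) yᵢ)²)`, which is nonnegative by
Cauchy–Schwarz because `(κᵢ^(k-1))² = κᵢ^k κᵢ^(k-2)`.
-/

open Real

open ContinuousLinearMap in
lemma sum_smul_proj_apply_single {ι : Type*} [Fintype ι] [DecidableEq ι] (c : ι → ℝ) (j : ι) :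
    (∑ i, c i • proj (R := ℝ) (φ := fun _ : ι => ℝ) i) (Pi.single j 1) = c j := by
  simp [sum_apply, Pi.single_apply]

section PowerMean

variable {ι : Type*} [Fintype ι] (k : ℝ)

noncomputable def powerSum (κ : ι → ℝ) : ℝ := ∑ i, κ i ^ k

noncomputable def powerMean (κ : ι → ℝ) : ℝ :=
  (Fintype.card ι : ℝ) ^ (-(1 / k)) * powerSum k κ ^ (1 / k)

variable {k} {κ : ι → ℝ}

lemma powerSum_pos [Nonempty ι] (hκ : ∀ i, 0 < κ i) : 0 < powerSum k κ :=
  Finset.sum_pos (fun i _ => rpow_pos_of_pos (hκ i) k) Finset.univ_nonempty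

lemma powerMean_pos [Nonempty ι] (hκ : ∀ i, 0 < κ i) : 0 < powerMean k κ := by
  unfold powerMean
  have := powerSum_pos (k := k) hκ
  positivity

lemma powerMean_comp_perm (κ : ι → ℝ) (σ : Equiv.Perm ι) :
    powerMean k (κ ∘ σ) = powerMean k κ := by
  simp only [powerMean, powerSum, Function.comp_apply, Equiv.sum_comp σ (fun i => κ i ^ k)]

lemma powerSum_smul {c : ℝ} (hc : 0 ≤ c) (hκ : ∀ i, 0 ≤ κ i) :
    powerSum k (c • κ) = c ^ k * powerSum k κ := by
  simp only [powerSum, Finset.mul_sum, Pi.smul_apply, smul_eq_mul, mul_rpow hc (hκ _)]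

lemma powerMean_smul (hk : k ≠ 0) {c : ℝ} (hc : 0 ≤ c) (hκ : ∀ i, 0 ≤ κ i) :
    powerMean k (c • κ) = c * powerMean k κ := by
  have hS : 0 ≤ powerSum k κ := Finset.sum_nonneg fun i _ => rpow_nonneg (hκ i) k
  rw [powerMean, powerMean, powerSum_smul hc hκ, mul_rpow (rpow_nonneg hc k) hS,
    ← rpow_mul hc, mul_one_div_cancel hk, rpow_one]
  ring

lemma powerMean_one [Nonempty ι] : powerMean k (fun _ : ι => (1 : ℝ)) = 1 := by
  have hn : (0 : ℝ) < Fintype.card ι := Nat.cast_pos.mpr Fintype.card_pos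
  simp only [powerMean, powerSum, one_rpow, Finset.sum_const, Finset.card_univ, nsmul_eq_mul,
    mul_one]
  rw [rpow_neg hn.le, inv_mul_cancel₀ (rpow_pos_of_pos hn _).ne']

lemma hasFDerivAt_powerSum (hκ : ∀ i, κ i ≠ 0) :
    HasFDerivAt (powerSum k)
      (∑ i, (k * κ i ^ (k - 1)) • ContinuousLinearMap.proj (R := ℝ) (φ := fun _ : ι => ℝ) i) κ :=
  -- `by exact` delays elaboration until the goal `HasFDerivAt (fun y => y i ^ k) _ κ` is known
  HasFDerivAt.fun_sum fun i _ => by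
    exact (hasDerivAt_rpow_const (Or.inl (hκ i))).comp_hasFDerivAt κ
      (hasFDerivAt_apply (𝕜 := ℝ) i κ)

lemma hasFDerivAt_powerMean (hκ : ∀ i, κ i ≠ 0) (hS : powerSum k κ ≠ 0) :
    HasFDerivAt (powerMean k)
      (((Fintype.card ι : ℝ) ^ (-(1 / k)) * (1 / k * powerSum k κ ^ (1 / k - 1))) •
        ∑ i, (k * κ i ^ (k - 1)) • ContinuousLinearMap.proj (R := ℝ) (φ := fun _ : ι => ℝ) i) κ :=
  ((hasDerivAt_rpow_const (Or.inl hS)).const_mul _).comp_hasFDerivAt κ (hasFDerivAt_powerSum hκ)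

variable [DecidableEq ι]

lemma fderiv_powerMean_apply_single (hk : k ≠ 0) (hκ : ∀ i, κ i ≠ 0) (hS : powerSum k κ ≠ 0)
    (j : ι) :
    fderiv ℝ (powerMean k) κ (Pi.single j 1) = powerMean k κ / powerSum k κ * κ j ^ (k - 1) := by
  rw [(hasFDerivAt_powerMean hκ hS).fderiv, _root_.smul_apply,
    sum_smul_proj_apply_single, smul_eq_mul, rpow_sub_one hS, powerMean]
  field_simp

lemma fderiv_powerMean_apply_single_pos [Nonempty ι] (hk : k ≠ 0) (hκ : ∀ i, 0 < κ i) (j : ι) :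
    0 < fderiv ℝ (powerMean k) κ (Pi.single j 1) := by
  rw [fderiv_powerMean_apply_single hk (fun i => (hκ i).ne') (powerSum_pos hκ).ne']
  exact mul_pos (div_pos (powerMean_pos hκ) (powerSum_pos hκ)) (rpow_pos_of_pos (hκ j) _)

lemma fderiv_powerMean_mul_sub_nonneg [Nonempty ι] (hk : 0 < k) (hκ : ∀ i, 0 < κ i) (i j : ι) :
    0 ≤ (fderiv ℝ (powerMean k) κ (Pi.single i 1) * κ i -
      fderiv ℝ (powerMean k) κ (Pi.single j 1) * κ j) * (κ i - κ j) := by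
  have hmono : Monovary (fun i => κ i ^ k) κ := fun i j h =>
    rpow_le_rpow (hκ i).le h.le hk.le
  have hweight : 0 < powerMean k κ / powerSum k κ := div_pos (powerMean_pos hκ) (powerSum_pos hκ)
  have hEuler : ∀ i, fderiv ℝ (powerMean k) κ (Pi.single i 1) * κ i =
      powerMean k κ / powerSum k κ * κ i ^ k := fun i => by
    rw [fderiv_powerMean_apply_single hk.ne' (fun i => (hκ i).ne') (powerSum_pos hκ).ne',
      rpow_sub_one (hκ i).ne']
    field_simp [(hκ i).ne']
  rw [hEuler, hEuler, ← mul_sub, mul_assoc]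
  exact mul_nonneg hweight.le (hmono.sub_mul_sub_nonneg j i)

lemma fderiv_log_powerMean_apply_single [Nonempty ι] (hk : k ≠ 0) (hκ : ∀ i, 0 < κ i) (j : ι) :
    fderiv ℝ (fun κ => log (powerMean k κ)) κ (Pi.single j 1) = κ j ^ (k - 1) / powerSum k κ := by
  have hκ₀ : ∀ i, κ i ≠ 0 := fun i => (hκ i).ne'
  have hS := (powerSum_pos (k := k) hκ).ne'
  rw [fderiv.log (hasFDerivAt_powerMean hκ₀ hS).differentiableAt (powerMean_pos hκ).ne',
    _root_.smul_apply, fderiv_powerMean_apply_single hk hκ₀ hS, smul_eq_mul]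
  field_simp [(powerMean_pos (k := k) hκ).ne']

lemma fderiv_fderiv_log_powerMean_apply_single [Nonempty ι] (hk : k ≠ 0) (hκ : ∀ i, 0 < κ i)
    (i j : ι) :
    fderiv ℝ (fun κ' => fderiv ℝ (fun κ => log (powerMean k κ)) κ' (Pi.single i 1)) κ
        (Pi.single j 1) =
      (k - 1) * κ i ^ (k - 2) * (if i = j then 1 else 0) / powerSum k κ -
        k * κ i ^ (k - 1) * κ j ^ (k - 1) / powerSum k κ ^ 2 := by
  have hκ₀ : ∀ i, κ i ≠ 0 := fun i => (hκ i).ne'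
  have hS := (powerSum_pos (k := k) hκ).ne'
  have hnear : ∀ᶠ κ' in nhds κ, ∀ i, 0 < κ' i :=
    Filter.eventually_all.2 fun i =>
      (continuous_apply i).continuousAt.eventually (lt_mem_nhds (hκ i))
  have hlocal : (fun κ' => fderiv ℝ (fun κ => log (powerMean k κ)) κ' (Pi.single i 1)) =ᶠ[nhds κ]
      fun κ' => κ' i ^ (k - 1) * (powerSum k κ')⁻¹ := by
    filter_upwards [hnear] with κ' hκ'
    rw [fderiv_log_powerMean_apply_single hk hκ' i, div_eq_mul_inv]
  have hnum := (hasDerivAt_rpow_const (p := k - 1) (Or.inl (hκ₀ i))).comp_hasFDerivAt κ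
    (hasFDerivAt_apply (𝕜 := ℝ) i κ)
  have hden := (hasDerivAt_inv hS).comp_hasFDerivAt κ (hasFDerivAt_powerSum (k := k) hκ₀)
  have hquot : HasFDerivAt (fun κ' => κ' i ^ (k - 1) * (powerSum k κ')⁻¹) _ κ :=
    hnum.fun_mul hden
  rw [hlocal.fderiv_eq, hquot.fderiv]
  simp only [_root_.add_apply, _root_.smul_apply, sum_smul_proj_apply_single,
    ContinuousLinearMap.proj_apply, Pi.single_apply, smul_eq_mul, Function.comp_apply,
    sub_sub, one_add_one_eq_two]
  ring

lemma log_powerMean_hessian_add_nonneg [Nonempty ι] (hk : 0 < k) (hκ : ∀ i, 0 < κ i)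
    (y : ι → ℝ) :
    0 ≤ (∑ i, ∑ j,
        fderiv ℝ (fun κ' => fderiv ℝ (fun κ => log (powerMean k κ)) κ' (Pi.single i 1)) κ
          (Pi.single j 1) * y i * y j) +
      ∑ i, (κ i)⁻¹ * fderiv ℝ (fun κ => log (powerMean k κ)) κ (Pi.single i 1) * y i ^ 2 := by
  have hS := powerSum_pos (k := k) hκ
  set S := powerSum k κ
  set A := ∑ i, κ i ^ (k - 2) * y i ^ 2
  set B := ∑ i, κ i ^ (k - 1) * y i
  have hhess : ∑ i, ∑ j,
      fderiv ℝ (fun κ' => fderiv ℝ (fun κ => log (powerMean k κ)) κ' (Pi.single i 1)) κ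
        (Pi.single j 1) * y i * y j = (k - 1) / S * A - k / S ^ 2 * B ^ 2 := by
    have hterm : ∀ i j,
        fderiv ℝ (fun κ' => fderiv ℝ (fun κ => log (powerMean k κ)) κ' (Pi.single i 1)) κ
          (Pi.single j 1) * y i * y j =
        (k - 1) / S * (if i = j then κ i ^ (k - 2) * y i ^ 2 else 0) -
          k / S ^ 2 * ((κ i ^ (k - 1) * y i) * (κ j ^ (k - 1) * y j)) := by
      intro i j
      rw [fderiv_fderiv_log_powerMean_apply_single hk.ne' hκ]
      split_ifs with h
      · subst h; ring
      · ring
    simp only [hterm, Finset.sum_sub_distrib, ← Finset.mul_sum, Finset.sum_ite_eq,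
      Finset.mem_univ, if_true]
    rw [← Finset.sum_mul, sq B]
  have hgrad : ∑ i, (κ i)⁻¹ * fderiv ℝ (fun κ => log (powerMean k κ)) κ (Pi.single i 1) * y i ^ 2
      = A / S := by
    simp only [fderiv_log_powerMean_apply_single hk.ne' hκ, A, Finset.sum_div]
    refine Finset.sum_congr rfl fun i _ => ?_
    rw [show k - 2 = k - 1 - 1 by ring, rpow_sub_one (hκ i).ne' (k - 1)]
    ring
  have hCS : B ^ 2 ≤ S * A := Finset.sum_sq_le_sum_mul_sum_of_sq_le_mul _
    (fun i _ => rpow_nonneg (hκ i).le k) (fun i _ => by have := hκ i; positivity)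
    fun i _ => by
      rw [mul_pow, sq (κ i ^ (k - 1)), ← rpow_add (hκ i), ← mul_assoc, ← rpow_add (hκ i),
        show k + (k - 2) = k - 1 + (k - 1) by ring]
  rw [hhess, hgrad]
  calc (0 : ℝ) ≤ k / S ^ 2 * (S * A - B ^ 2) := by have := sub_nonneg.2 hCS; positivity
    _ = _ := by field_simp; ring

end PowerMean

/-- For any `k > 0`, the power-sum function `f(κ) = n^{-1/k} (∑ᵢ κᵢ^k)^{1/k}`
on `Γ₊` is (i) positive, symmetric, homogeneous of degree one, strictly
increasing, and normalized with `f(1,…,1) = 1`; and satisfies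
(ii) `(∂f/∂κᵢ κᵢ - ∂f/∂κⱼ κⱼ)(κᵢ - κⱼ) ≥ 0` for `i ≠ j`, and
(iii) `∑_{i,j}(∂² log f/∂κᵢ∂κⱼ) yᵢyⱼ + ∑ᵢ κᵢ⁻¹ (∂ log f/∂κᵢ) yᵢ² ≥ 0`. -/
theorem stmt6 (n : ℕ) (hn : 0 < n) (k : ℝ) (hk : 0 < k)
    (f : (Fin n → ℝ) → ℝ)
    (hfdef : ∀ κ : Fin n → ℝ,
      f κ = (n : ℝ) ^ (-(1 / k)) * (∑ i, κ i ^ k) ^ (1 / k)) :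
    (∀ κ ∈ {κ : Fin n → ℝ | ∀ i, 0 < κ i}, 0 < f κ) ∧
    (∀ (κ : Fin n → ℝ) (σ : Equiv.Perm (Fin n)), f (κ ∘ σ) = f κ) ∧
    (∀ κ ∈ {κ : Fin n → ℝ | ∀ i, 0 < κ i}, ∀ c : ℝ, 0 < c →
      f (c • κ) = c * f κ) ∧
    (∀ κ ∈ {κ : Fin n → ℝ | ∀ i, 0 < κ i}, ∀ i,
      0 < fderiv ℝ f κ (Pi.single i 1)) ∧
    f (fun _ => 1) = 1 ∧
    (∀ κ ∈ {κ : Fin n → ℝ | ∀ i, 0 < κ i}, ∀ i j : Fin n, i ≠ j →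
      0 ≤ (fderiv ℝ f κ (Pi.single i 1) * κ i - fderiv ℝ f κ (Pi.single j 1) * κ j) *
          (κ i - κ j)) ∧
    (∀ κ ∈ {κ : Fin n → ℝ | ∀ i, 0 < κ i}, ∀ y : Fin n → ℝ,
      0 ≤ (∑ i, ∑ j,
          (fderiv ℝ (fun κ' => fderiv ℝ (fun κ'' => Real.log (f κ'')) κ'
            (Pi.single i 1)) κ (Pi.single j 1)) * y i * y j)
        + ∑ i, (κ i)⁻¹ *
            fderiv ℝ (fun κ'' => Real.log (f κ'')) κ (Pi.single i 1) * (y i) ^ 2) := by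
  have : Nonempty (Fin n) := Fin.pos_iff_nonempty.mp hn
  obtain rfl : f = powerMean k := funext fun κ => by
    rw [hfdef, powerMean, powerSum, Fintype.card_fin]
  exact ⟨fun κ hκ => powerMean_pos hκ,
    powerMean_comp_perm,
    fun κ hκ c hc => powerMean_smul hk.ne' hc.le fun i => (hκ i).le,
    fun κ hκ => fderiv_powerMean_apply_single_pos hk.ne' hκ,
    powerMean_one,
    fun κ hκ i j _ => fderiv_powerMean_mul_sub_nonneg hk hκ i j,
    fun κ hκ => log_powerMean_hessian_add_nonneg hk hκ⟩
end

section
/- Let u₀, u₁ : Sⁿ → ℝ be smooth functions such that the tensors A[uᵢ]_{jk} = ∇̄_j∇̄_k φᵢ − (|∇̄φᵢ|²/(2φᵢ)) ḡ_{jk} + ((φᵢ − φᵢ⁻¹)/2) ḡ_{jk} are positive definite, where φᵢ = e^{uᵢ}. For t ∈ [0,1] define φ_t = (1−t)φ₀ + tφ₁ and u_t = log φ_t. Then A[u_t]_{jk} − (1−t)A[u₀]_{jk} − t A[u₁]_{jk} = t(1−t) · (|φ₀∇̄φ₁ − φ₁∇̄φ₀|² + (φ₁ − φ₀)²) / (2φ₀φ₁((1−t)φ₀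 + tφ₁)) · ḡ_{jk}; in particular A[u_t] ≥ (1−t)A[u₀] + t A[u₁] and A[u_t] is positive definite for all t ∈ [0,1]. -/
open scoped RealInnerProductSpace

/-- The pointwise value of the tensor
`A[u]_{jk} = ∇̄_j∇̄_k φ − (|∇̄φ|²/(2φ)) ḡ_{jk} + ((φ − φ⁻¹)/2) ḡ_{jk}`,
described by the covariant Hessian `H` of `φ`, the gradient `g` of `φ`, and the
value `φ`, evaluated on a pair of tangent vectors (with `ḡ` the inner product). -/
noncomputable def Atens {V : Type*} [NormedAddCommGroup V] [InnerProductSpace ℝ V]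
    (H : V → V → ℝ) (g : V) (φ : ℝ) : V → V → ℝ :=
  fun v w => H v w - (‖g‖ ^ 2 / (2 * φ)) * ⟪v, w⟫ + ((φ - φ⁻¹) / 2) * ⟪v, w⟫

/-- If `A[u₀]` and `A[u₁]` are positive definite, `φ_t = (1−t)φ₀ + tφ₁`
(so the Hessian and gradient of `φ_t` are the corresponding affine combinations),
then `A[u_t] − (1−t)A[u₀] − tA[u₁]` equals the explicit nonnegative multiple
`t(1−t)(|φ₀∇̄φ₁ − φ₁∇̄φ₀|² + (φ₁−φ₀)²)/(2φ₀φ₁((1−t)φ₀+tφ₁))` of `ḡ`; in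
particular `A[u_t] ≥ (1−t)A[u₀] + tA[u₁]` and `A[u_t]` is positive definite. -/
theorem stmt9 {V : Type*} [NormedAddCommGroup V] [InnerProductSpace ℝ V]
    (H0 H1 : V → V → ℝ) (g0 g1 : V) (φ0 φ1 : ℝ)
    (hφ0 : 0 < φ0) (hφ1 : 0 < φ1)
    (hpd0 : ∀ v : V, v ≠ 0 → 0 < Atens H0 g0 φ0 v v)
    (hpd1 : ∀ v : V, v ≠ 0 → 0 < Atens H1 g1 φ1 v v)
    (t : ℝ) (ht : t ∈ Set.Icc (0 : ℝ) 1) :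
    (∀ v : V,
      Atens (fun v w => (1 - t) * H0 v w + t * H1 v w)
          ((1 - t) • g0 + t • g1) ((1 - t) * φ0 + t * φ1) v v
        - (1 - t) * Atens H0 g0 φ0 v v - t * Atens H1 g1 φ1 v v
      = t * (1 - t) *
          ((‖φ0 • g1 - φ1 • g0‖ ^ 2 + (φ1 - φ0) ^ 2) /
            (2 * φ0 * φ1 * ((1 - t) * φ0 + t * φ1))) * ⟪v, v⟫) ∧
    (∀ v : V,
      (1 - t) * Atens H0 g0 φ0 v v + t * Atens H1 g1 φ1 v v ≤
        Atens (fun v w => (1 - t) * H0 v w + t * H1 v w)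
          ((1 - t) • g0 + t • g1) ((1 - t) * φ0 + t * φ1) v v) ∧
    (∀ v : V, v ≠ 0 →
      0 < Atens (fun v w => (1 - t) * H0 v w + t * H1 v w)
          ((1 - t) • g0 + t • g1) ((1 - t) * φ0 + t * φ1) v v) := by
  obtain ⟨ht0, ht1⟩ := ht
  have hφt : 0 < (1 - t) * φ0 + t * φ1 := by
    rcases eq_or_lt_of_le ht0 with h | h
    · simp [← h, hφ0]
    · nlinarith [mul_pos h hφ1, mul_nonneg (sub_nonneg.2 ht1) hφ0.le]
  have hnorm : ∀ x y : V, ‖x + y‖ ^ 2 = ‖x‖ ^ 2 + 2 * ⟪x, y⟫ + ‖y‖ ^ 2 := by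
    intro x y
    rw [← real_inner_self_eq_norm_sq, ← real_inner_self_eq_norm_sq,
      ← real_inner_self_eq_norm_sq, inner_add_add_self, real_inner_comm y x]
    ring
  have key : ∀ v : V,
      Atens (fun v w => (1 - t) * H0 v w + t * H1 v w)
          ((1 - t) • g0 + t • g1) ((1 - t) * φ0 + t * φ1) v v
        - (1 - t) * Atens H0 g0 φ0 v v - t * Atens H1 g1 φ1 v v
      = t * (1 - t) *
          ((‖φ0 • g1 - φ1 • g0‖ ^ 2 + (φ1 - φ0) ^ 2) /
            (2 * φ0 * φ1 * ((1 - t) * φ0 + t * φ1))) * ⟪v, v⟫ := by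
    intro v
    simp only [Atens]
    have e1 := hnorm ((1 - t) • g0) (t • g1)
    have e2 := hnorm (φ0 • g1) (-(φ1 • g0))
    rw [← sub_eq_add_neg] at e2
    simp only [norm_smul, inner_smul_left, inner_smul_right, RCLike.conj_to_real, inner_neg_right, norm_neg,
      mul_pow, Real.norm_eq_abs, sq_abs] at e1 e2
    rw [real_inner_comm g0 g1] at e2
    rw [e1, e2]
    field_simp
    ring
  refine ⟨key, fun v => ?_, fun v hv => ?_⟩
  · have h := key v
    have hnn : 0 ≤ t * (1 - t) *
        ((‖φ0 • g1 - φ1 • g0‖ ^ 2 + (φ1 - φ0) ^ 2) /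
          (2 * φ0 * φ1 * ((1 - t) * φ0 + t * φ1))) * ⟪v, v⟫ := by
      have := real_inner_self_nonneg (x := v)
      have h1 : (0:ℝ) ≤ ‖φ0 • g1 - φ1 • g0‖ ^ 2 + (φ1 - φ0) ^ 2 := by positivity
      have h2 : (0:ℝ) < 2 * φ0 * φ1 * ((1 - t) * φ0 + t * φ1) := by positivity
      have h3 : 0 ≤ t * (1 - t) := by nlinarith
      positivity
    linarith
  · have h := key v
    have hA0 := hpd0 v hv
    have hA1 := hpd1 v hv
    have hnn : 0 ≤ t * (1 - t) *
        ((‖φ0 • g1 - φ1 • g0‖ ^ 2 + (φ1 - φ0) ^ 2) /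
          (2 * φ0 * φ1 * ((1 - t) * φ0 + t * φ1))) * ⟪v, v⟫ := by
      have := real_inner_self_nonneg (x := v)
      have h1 : (0:ℝ) ≤ ‖φ0 • g1 - φ1 • g0‖ ^ 2 + (φ1 - φ0) ^ 2 := by positivity
      have h2 : (0:ℝ) < 2 * φ0 * φ1 * ((1 - t) * φ0 + t * φ1) := by positivity
      have h3 : 0 ≤ t * (1 - t) := by nlinarith
      positivity
    nlinarith [mul_nonneg ht0 hA1.le, mul_nonneg (sub_nonneg.2 ht1) hA0.le]
end

section
/- Let f : Γ₊ → ℝ be smooth, symmetric, positive, homogeneous of degree one and inverse concave. Then for every λ ∈ Γ₊ and every y ∈ ℝⁿ, Σ_{k,l} (∂²f/∂λ_k∂λ_l) y_k y_l + 2 Σ_k (∂f/∂λ_k) y_k²/λ_k ≥ 2 f(λ)⁻¹ (Σ_k (∂f/∂λ_k) y_k)². -/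
lemma aux_antitone_deriv {g : ℝ → ℝ} {R ε : ℝ} (hε : 0 < ε)
    (hanti : AntitoneOn g (Metric.ball (0:ℝ) ε)) (hg : HasDerivAt g R 0) : R ≤ 0 := by
  have h := hasDerivAt_iff_tendsto_slope.mp hg
  have T : Filter.Tendsto (slope g 0) (nhdsWithin 0 (Set.Ioi 0)) (nhds R) :=
    h.mono_left (nhdsWithin_mono 0 (fun x hx => ne_of_gt hx))
  have ev : ∀ᶠ x in nhdsWithin 0 (Set.Ioi 0), slope g 0 x ≤ 0 := by
    filter_upwards [Ioo_mem_nhdsGT_of_mem (Set.mem_Ico.mpr ⟨le_rfl, hε⟩)] with x hx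
    have hx0 : (0:ℝ) < x := hx.1
    have hxb : x ∈ Metric.ball (0:ℝ) ε := by
      simp [Real.dist_eq, abs_of_pos hx0, hx.2]
    have h0b : (0:ℝ) ∈ Metric.ball (0:ℝ) ε := by simp [hε]
    have := hanti h0b hxb hx0.le
    rw [slope_def_field]
    apply div_nonpos_of_nonpos_of_nonneg <;> linarith
  exact le_of_tendsto T ev

lemma aux_clm_sum {n : ℕ} (L : (Fin n → ℝ) →L[ℝ] ℝ) (v : Fin n → ℝ) :
    L v = ∑ k, L (Pi.single k 1) * v k := by
  have hv : v = ∑ k, (v k) • (Pi.single k 1 : Fin n → ℝ) := by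
    funext i
    simp [Finset.sum_apply, Pi.single_apply, mul_comm]
  conv_lhs => rw [hv]
  rw [map_sum]
  simp [mul_comm]

/-- Let `f : Γ₊ → ℝ` be smooth, symmetric, positive, homogeneous of degree one
and inverse concave.  Then for every `λ ∈ Γ₊` and every `y ∈ ℝⁿ`,
`∑_{k,l} (∂²f/∂λ_k∂λ_l) y_k y_l + 2 ∑_k (∂f/∂λ_k) y_k²/λ_k
  ≥ 2 f(λ)⁻¹ (∑_k (∂f/∂λ_k) y_k)²`. -/
theorem stmt19 (n : ℕ) (f : (Fin n → ℝ) → ℝ)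
    (hf : ContDiffOn ℝ (⊤ : ℕ∞) f {κ : Fin n → ℝ | ∀ i, 0 < κ i})
    (hsymm : ∀ (κ : Fin n → ℝ) (σ : Equiv.Perm (Fin n)), f (κ ∘ σ) = f κ)
    (hpos : ∀ κ ∈ {κ : Fin n → ℝ | ∀ i, 0 < κ i}, 0 < f κ)
    (hhom : ∀ κ ∈ {κ : Fin n → ℝ | ∀ i, 0 < κ i}, ∀ c : ℝ, 0 < c →
      f (c • κ) = c * f κ)
    (hinv : ConcaveOn ℝ {κ : Fin n → ℝ | ∀ i, 0 < κ i}
      (fun z => (f fun i => (z i)⁻¹)⁻¹)) :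
    ∀ lam ∈ {κ : Fin n → ℝ | ∀ i, 0 < κ i}, ∀ y : Fin n → ℝ,
      2 * (f lam)⁻¹ * (∑ k, fderiv ℝ f lam (Pi.single k 1) * y k) ^ 2 ≤
        (∑ k, ∑ l,
          (fderiv ℝ (fun κ' => fderiv ℝ f κ' (Pi.single k 1)) lam (Pi.single l 1))
            * y k * y l)
        + 2 * ∑ k, fderiv ℝ f lam (Pi.single k 1) * (y k) ^ 2 / lam k := by
  intro lam hlam y
  classical
  have hS : IsOpen {κ : Fin n → ℝ | ∀ i, 0 < κ i} := by
    have : {κ : Fin n → ℝ | ∀ i, 0 < κ i} = ⋂ i, (fun κ : Fin n → ℝ => κ i) ⁻¹' Set.Ioi 0 := by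
      ext κ; simp [Set.mem_iInter]
    rw [this]
    exact isOpen_iInter_of_finite fun i => isOpen_Ioi.preimage (continuous_apply i)
  have hlam' : ∀ i, 0 < lam i := hlam
  -- basic curves
  set c : Fin n → ℝ := fun i => y i / (lam i) ^ 2 with hc
  set z : ℝ → Fin n → ℝ := fun t i => (lam i)⁻¹ - t * c i with hzdef
  -- choose ε
  have hzcont : Continuous z := by
    apply continuous_pi
    intro i
    exact continuous_const.sub (continuous_id.mul continuous_const)
  have hz0S : z 0 ∈ {κ : Fin n → ℝ | ∀ i, 0 < κ i} := by
    intro i; simp only [hzdef, zero_mul, sub_zero]; exact inv_pos.mpr (hlam' i)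
  obtain ⟨ε, hε, hball⟩ : ∃ ε > 0, Metric.ball (0:ℝ) ε ⊆ z ⁻¹' {κ : Fin n → ℝ | ∀ i, 0 < κ i} := by
    have hop : IsOpen (z ⁻¹' {κ : Fin n → ℝ | ∀ i, 0 < κ i}) := hS.preimage hzcont
    exact Metric.isOpen_iff.mp hop 0 hz0S
  have h0B : (0:ℝ) ∈ Metric.ball (0:ℝ) ε := by simp [hε]
  have hzpos : ∀ t ∈ Metric.ball (0:ℝ) ε, ∀ i, 0 < z t i := fun t ht => hball ht
  have hzne : ∀ t ∈ Metric.ball (0:ℝ) ε, ∀ i, z t i ≠ 0 := fun t ht i => (hzpos t ht i).ne'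
  set w : ℝ → Fin n → ℝ := fun t i => (z t i)⁻¹ with hwdef
  set d : ℝ → Fin n → ℝ := fun t i => c i * ((z t i) ^ 2)⁻¹ with hddef
  have hwS : ∀ t ∈ Metric.ball (0:ℝ) ε, w t ∈ {κ : Fin n → ℝ | ∀ i, 0 < κ i} :=
    fun t ht i => inv_pos.mpr (hzpos t ht i)
  have hw0 : w 0 = lam := by
    funext i; simp [hwdef, hzdef]
  have hd0 : d 0 = y := by
    funext i
    simp only [hddef, hzdef, hc, zero_mul, sub_zero]
    field_simp [(hlam' i).ne']
  -- derivative of z components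
  have hz' : ∀ (t : ℝ) (i : Fin n), HasDerivAt (fun s => z s i) (-(1 * c i)) t := by
    intro t i
    simpa using (HasDerivAt.const_sub ((lam i)⁻¹) ((hasDerivAt_id t).mul_const (c i)))
  -- derivative of w
  have hw' : ∀ t ∈ Metric.ball (0:ℝ) ε, HasDerivAt w (d t) t := by
    intro t ht
    rw [hasDerivAt_pi]
    intro i
    have := (hz' t i).inv (hzne t ht i)
    refine this.congr_deriv ?_
    simp [hddef, div_eq_mul_inv]
  -- psi and its derivative
  set F : Fin n → (Fin n → ℝ) → ℝ := fun k x => fderiv ℝ f x (Pi.single k 1) with hFdef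
  set ψ : ℝ → ℝ := fun t => f (w t) with hψdef
  set ψ1 : ℝ → ℝ := fun t => ∑ k, F k (w t) * d t k with hψ1def
  have hψ' : ∀ t ∈ Metric.ball (0:ℝ) ε, HasDerivAt ψ (ψ1 t) t := by
    intro t ht
    have hdf : HasFDerivAt f (fderiv ℝ f (w t)) (w t) :=
      ((hf.contDiffAt (hS.mem_nhds (hwS t ht))).differentiableAt (by simp)).hasFDerivAt
    have h := hdf.comp_hasDerivAt t (hw' t ht)
    have heq : (fderiv ℝ f (w t)) (d t) = ψ1 t := by
      rw [aux_clm_sum]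
    rw [heq] at h
    exact h
  have hψpos : ∀ t ∈ Metric.ball (0:ℝ) ε, 0 < ψ t := fun t ht => hpos _ (hwS t ht)
  -- phi and its derivative
  set φ : ℝ → ℝ := fun t => (ψ t)⁻¹ with hφdef
  set φ1 : ℝ → ℝ := fun t => -ψ1 t / ψ t ^ 2 with hφ1def
  have hφ' : ∀ t ∈ Metric.ball (0:ℝ) ε, HasDerivAt φ (φ1 t) t :=
    fun t ht => (hψ' t ht).inv (hψpos t ht).ne'
  -- concavity of φ on the ball
  have hφconc : ConcaveOn ℝ (Metric.ball (0:ℝ) ε) φ := by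
    refine ⟨convex_ball _ _, ?_⟩
    intro p hp q hq a b ha hb hab
    have hzp : z p ∈ {κ : Fin n → ℝ | ∀ i, 0 < κ i} := hball hp
    have hzq : z q ∈ {κ : Fin n → ℝ | ∀ i, 0 < κ i} := hball hq
    have key := hinv.2 hzp hzq ha hb hab
    have hzeq : z (a • p + b • q) = a • z p + b • z q := by
      funext i
      simp only [hzdef, Pi.add_apply, Pi.smul_apply, smul_eq_mul]
      linear_combination (lam i)⁻¹ * hab.symm
      
    calc a • φ p + b • φ q = a • (f fun i => (z p i)⁻¹)⁻¹ + b • (f fun i => (z q i)⁻¹)⁻¹ := rfl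
      _ ≤ (f fun i => ((a • z p + b • z q) i)⁻¹)⁻¹ := key
      _ = φ (a • p + b • q) := by rw [← hzeq]
  have hφanti : AntitoneOn (deriv φ) (Metric.ball (0:ℝ) ε) :=
    hφconc.antitoneOn_deriv (fun x hx => (hφ' x hx).differentiableAt)
  have hφ1anti : AntitoneOn φ1 (Metric.ball (0:ℝ) ε) := by
    intro p hp q hq hpq
    rw [← (hφ' p hp).deriv, ← (hφ' q hq).deriv]
    exact hφanti hp hq hpq
  -- second derivative data at 0
  have hFd : ∀ k : Fin n, HasDerivAt (fun t => F k (w t))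
      (∑ l, fderiv ℝ (F k) lam (Pi.single l 1) * y l) 0 := by
    intro k
    have h1 : ContDiffAt ℝ (⊤ : ℕ∞) (fderiv ℝ f) lam :=
      (hf.contDiffAt (hS.mem_nhds hlam)).fderiv_right (by simp)
    have h2 : DifferentiableAt ℝ (F k) lam :=
      (h1.clm_apply contDiffAt_const).differentiableAt (by simp)
    have hdF : HasFDerivAt (F k) (fderiv ℝ (F k) lam) (w 0) := by
      rw [hw0]; exact h2.hasFDerivAt
    have h := hdF.comp_hasDerivAt 0 (hw' 0 h0B)
    rw [aux_clm_sum, hd0] at h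
    exact h
  have hdk : ∀ k : Fin n, HasDerivAt (fun t => d t k) (2 * (y k) ^ 2 / lam k) 0 := by
    intro k
    have hsq : HasDerivAt (fun s => (z s k) ^ 2) (2 * z 0 k ^ 1 * -(1 * c k)) 0 :=
      (hz' 0 k).pow 2
    have hinv2 := hsq.inv (pow_ne_zero 2 (hzne 0 h0B k))
    have h := hinv2.const_mul (c k)
    refine h.congr_deriv ?_
    have hz00 : z 0 k = (lam k)⁻¹ := by simp [hzdef]
    rw [hz00, hc]
    field_simp [(hlam' k).ne']
  set Q : ℝ := ∑ k, ((∑ l, fderiv ℝ (F k) lam (Pi.single l 1) * y l) * d 0 k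
      + F k (w 0) * (2 * (y k) ^ 2 / lam k)) with hQdef
  have hψ1' : HasDerivAt ψ1 Q 0 := by
    apply HasDerivAt.fun_sum
    intro k _
    exact (hFd k).mul (hdk k)
  -- derivative of φ1 at 0
  have hφ1d : HasDerivAt φ1
      ((-Q * ψ 0 ^ 2 - (-ψ1 0) * (2 * ψ 0 ^ 1 * ψ1 0)) / (ψ 0 ^ 2) ^ 2) 0 := by
    exact (hψ1'.neg).div ((hψ' 0 h0B).pow 2) (pow_ne_zero 2 (hψpos 0 h0B).ne')
  have hR : (-Q * ψ 0 ^ 2 - (-ψ1 0) * (2 * ψ 0 ^ 1 * ψ1 0)) / (ψ 0 ^ 2) ^ 2 ≤ 0 :=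
    aux_antitone_deriv hε hφ1anti hφ1d
  -- algebra
  have hP : 0 < ψ 0 := hψpos 0 h0B
  have hnum : -Q * ψ 0 ^ 2 + ψ1 0 * (2 * ψ 0 * ψ1 0) ≤ 0 := by
    rcases div_nonpos_iff.mp hR with ⟨h1, h2⟩ | ⟨h1, h2⟩
    · nlinarith [pow_pos hP 2]
    · nlinarith
  have hmain : 2 * (ψ 0)⁻¹ * (ψ1 0) ^ 2 ≤ Q := by
    have hkey : 0 ≤ Q * ψ 0 ^ 2 - 2 * ψ 0 * ψ1 0 ^ 2 := by nlinarith
    have hid : Q - 2 * (ψ 0)⁻¹ * ψ1 0 ^ 2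
        = (Q * ψ 0 ^ 2 - 2 * ψ 0 * ψ1 0 ^ 2) * ((ψ 0)⁻¹) ^ 2 := by
      field_simp
    nlinarith [mul_nonneg hkey (by positivity : (0:ℝ) ≤ ((ψ 0)⁻¹) ^ 2)]
  -- translate to the goal
  have hflam : f lam = ψ 0 := by rw [hψdef]; simp [hw0]
  have hsum1 : (∑ k, fderiv ℝ f lam (Pi.single k 1) * y k) = ψ1 0 := by
    rw [hψ1def]
    simp only [hw0, hd0, hFdef]
  have hsum2 : (∑ k, ∑ l,
        (fderiv ℝ (fun κ' => fderiv ℝ f κ' (Pi.single k 1)) lam (Pi.single l 1))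
          * y k * y l)
      + 2 * ∑ k, fderiv ℝ f lam (Pi.single k 1) * (y k) ^ 2 / lam k = Q := by
    rw [hQdef]
    simp only [hw0, hd0, hFdef]
    rw [Finset.sum_add_distrib, Finset.mul_sum]
    congr 1
    · apply Finset.sum_congr rfl
      intro k _
      rw [Finset.sum_mul]
      apply Finset.sum_congr rfl
      intro l _
      ring
    · apply Finset.sum_congr rfl
      intro k _
      ring
  rw [hflam, hsum1, hsum2]
  exact hmain
end
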